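/- For any sort A and type T of order at most 1 such that every sort occurring in T is ⊑ A and every occurrence of A in T is negative (Pos(A,T) ⊆ Pos⁻(T)), we have NPos_A(T) = LPos_A(T) = CPos_A(T) = ∅. -/
import Mathlib


inductive Ty (S : Type*) : Type _
  | sort (A : S) : Ty S
  | arrow (T U : Ty S) : Ty S

/-- The order of a type. -/
def Ty.orderOf {S : Type*} : Ty S → ℕ
  | .sort _ => 0
  | .arrow T U => max (1 + T.orderOf) U.orderOf

/-- A sort `B` occurs in a type. -/
def Ty.occurs {S : Type*} (B : S) : Ty S → Prop
  | .sort A => A = B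
  | .arrow T U => T.occurs B ∨ U.occurs B

mutual
/-- Positions witnessing the dependency on (comp-sn), wrt the sort `A`;
`true` encodes the letter 1, `false` the letter 2. -/
def SPos {S : Type*} [DecidableEq S] (A : S) : Ty S → Set (List Bool)
  | .sort _ => ∅
  | .arrow U V => (fun p => true :: p) '' NPos A U ∪ (fun p => false :: p) '' SPos A V

/-- Positions witnessing the dependency on (comp-neutral), wrt the sort `A`. -/
def NPos {S : Type*} [DecidableEq S] (A : S) : Ty S → Set (List Bool)
  | .sort _ => ∅
  | .arrow U V =>
      (fun p => true :: p) '' SPos A U ∪ (fun p => false :: p) '' (LPos A V ∪ CPos A V)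

/-- Positions witnessing the dependency on (comp-small), wrt the sort `A`.
`CPos A (U→V) = NPos A (U→V)` (unfolded for structural recursion). -/
def CPos {S : Type*} [DecidableEq S] (A : S) : Ty S → Set (List Bool)
  | .sort B => if B = A then {[]} else ∅
  | .arrow U V =>
      (fun p => true :: p) '' SPos A U ∪ (fun p => false :: p) '' (LPos A V ∪ CPos A V)

/-- Positions witnessing the dependency on (comp-lam), wrt the sort `A`
(the summand `CPos A (U→V)` is unfolded for structural recursion). -/
def LPos {S : Type*} [DecidableEq S] (A : S) : Ty S → Set (List Bool)
  | .sort _ => ∅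
  | .arrow U V =>
      ((fun p => true :: p) '' SPos A U ∪ (fun p => false :: p) '' (LPos A V ∪ CPos A V)) ∪
      (fun p => true :: p) '' (SPos A U ∪ NPos A U) ∪
      (fun p => false :: p) '' (LPos A V ∪ CPos A V)
end

mutual
/-- Positive positions of a type. -/
def Ty.posP {S : Type*} : Ty S → Set (List Bool)
  | .sort _ => {[]}
  | .arrow T U => (fun p => true :: p) '' T.posN ∪ (fun p => false :: p) '' U.posP

/-- Negative positions of a type. -/
def Ty.posN {S : Type*} : Ty S → Set (List Bool)
  | .sort _ => ∅
  | .arrow T U => (fun p => true :: p) '' T.posP ∪ (fun p => false :: p) '' U.posN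
end

/-- Positions of the sort `A` in a type. -/
def Ty.posOf {S : Type*} [DecidableEq S] (A : S) : Ty S → Set (List Bool)
  | .sort B => if B = A then {[]} else ∅
  | .arrow T U => (fun p => true :: p) '' T.posOf A ∪ (fun p => false :: p) '' U.posOf A

theorem nPos_lPos_cPos_empty_of_order_le_one {S : Type*} [DecidableEq S]
    (le : S → S → Prop) (hrefl : ∀ a, le a a)
    (htrans : ∀ a b c, le a b → le b c → le a c)
    (A : S) (T : Ty S)
    (horder : T.orderOf ≤ 1)
    (hsorts : ∀ B : S, T.occurs B → le B A)
    (hneg : T.posOf A ⊆ T.posN) :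
    NPos A T = ∅ ∧ LPos A T = ∅ ∧ CPos A T = ∅ := by
  induction T with
  | sort B =>
    have hBA : B ≠ A := by
      intro h
      have : [] ∈ (Ty.sort B).posN := hneg (by simp [Ty.posOf, h])
      simp [Ty.posN] at this
    refine ⟨?_, ?_, ?_⟩ <;> simp [NPos, LPos, CPos, hBA]
  | arrow U V ihU ihV =>
    have hU0 : U.orderOf = 0 := by
      have : 1 + U.orderOf ≤ 1 := le_trans (le_max_left _ _) horder
      omega
    obtain ⟨B, rfl⟩ : ∃ B, U = Ty.sort B := by
      cases U with
      | sort B => exact ⟨B, rfl⟩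
      | arrow _ _ => simp [Ty.orderOf] at hU0
    have hnegV : V.posOf A ⊆ V.posN := by
      intro p hp
      have : (false :: p) ∈ (Ty.arrow (Ty.sort B) V).posN :=
        hneg (Or.inr ⟨p, hp, rfl⟩)
      rcases this with ⟨q, _, hq⟩ | ⟨q, hq, hq2⟩
      · simp at hq
      · cases hq2; exact hq
    have hordV : V.orderOf ≤ 1 := le_trans (le_max_right _ _) horder
    have hsortsV : ∀ C : S, V.occurs C → le C A := fun C hC =>
      hsorts C (Or.inr hC)
    obtain ⟨hN, hL, hC⟩ := ihV hordV hsortsV hnegV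
    refine ⟨?_, ?_, ?_⟩ <;> simp [NPos, LPos, CPos, SPos, hL, hC]
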